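/- arXiv:1212.4654 — 2 statements merged into one kernel-verified Lean document; each statement's English description precedes it below -/
import Mathlib

section
/- Let q = p^t with p an odd prime and t ≥ 2, n = q+1, a = n/2, and 2 ≤ i ≤ a−1. Let α be a primitive n-th root of unity in F_{q^2}, and let C be the cyclic code of length n over F_q with generator polynomial g(x) equal to the lcm of the minimal polynomials of α^{a−i}, …, α^a over F_q. Then deg g = 2i+1, C has dimension n − 2i − 1, and C is an MDS code with minimum distance 2i+2. -/
/-- The q-ary cyclotomic coset of `s` modulo `n`. -/
def cyclotomicCoset (q n s : ℕ) : Set ℕ := {x | ∃ j : ℕ, x = s * q ^ j % n}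

/-- The evaluation-at-`α^s` parity-check functional. -/
noncomputable def bchCheck (F E : Type*) [Field F] [Field E] [Algebra F E]
    (n : ℕ) (α : E) (s : ℕ) : (Fin n → F) →ₗ[F] E where
  toFun c := ∑ j : Fin n, c j • α ^ (s * (j : ℕ))
  map_add' x y := by simp [add_smul, Finset.sum_add_distrib]
  map_smul' r x := by simp [smul_smul, Finset.smul_sum]

/-- The cyclic (BCH) code of length `n` over `F` with defining set `Z`; this is the
code with generator polynomial the lcm of the minimal polynomials of `α^s`, `s ∈ Z`. -/
noncomputable def bchCode (F E : Type*) [Field F] [Field E] [Algebra F E]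
    (n : ℕ) (α : E) (Z : Set ℕ) : Submodule F (Fin n → F) :=
  ⨅ s ∈ Z, LinearMap.ker (bchCheck F E n α s)

/-!
Since `q ≡ -1 (mod n)` and `n = 2a`, the cyclotomic coset of `a - j` is `{a - j, a + j}`. Hence the
defining set contains the `2i + 1` consecutive exponents `a - i, …, a + i`, and the BCH bound gives
`d ≥ 2i + 2`. Conversely, the checks at the other coset elements are Frobenius images of those at
the representatives `a - i, …, a`, so the code is cut out by these `i + 1` checks. Each is
`𝔽_{q²}`-valued, hence at most two `𝔽_q`-linear conditions, and the check at `a` is `𝔽_q`-valued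
because `α ^ a = -1`; so the codimension is at most `2i + 1`. The Singleton bound `k ≤ n - d + 1`
(some nonzero codeword vanishes on any `k - 1` coordinates) forces equality in both estimates and
produces a codeword of weight exactly `2i + 2`.
-/

open Finset Module

section HammingWeight

variable {ι F : Type*} [Fintype ι] [Field F]

lemma hammingNorm_le_card_sub_of_forall_eq_zero [DecidableEq F] {c : ι → F} {S : Finset ι}
    (hc : ∀ j ∈ S, c j = 0) : hammingNorm c ≤ Fintype.card ι - #S := by
  classical
  rw [← card_compl]
  exact card_le_card fun j hj => mem_compl.2 fun hjS => (mem_filter.1 hj).2 (hc j hjS)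

lemma exists_ne_zero_forall_eq_zero_of_card_lt_finrank (C : Submodule F (ι → F))
    (S : Finset ι) (hS : #S < finrank F C) : ∃ c ∈ C, c ≠ 0 ∧ ∀ j ∈ S, c j = 0 := by
  let restrict : C →ₗ[F] (S → F) := (LinearMap.funLeft F F Subtype.val).comp C.subtype
  obtain ⟨c, hc, hc0⟩ :=
    (Submodule.ne_bot_iff _).1 (restrict.ker_ne_bot_of_finrank_lt (by simpa using hS))
  exact ⟨c, c.2, by simpa using hc0, fun j hj => congrFun hc ⟨j, hj⟩⟩

lemma exists_ne_zero_hammingNorm_add_le [DecidableEq F] (C : Submodule F (ι → F)) {k : ℕ}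
    (hk0 : 0 < k) (hk : k ≤ finrank F C) :
    ∃ c ∈ C, c ≠ 0 ∧ hammingNorm c + k ≤ Fintype.card ι + 1 := by
  have hkι : k ≤ Fintype.card ι :=
    hk.trans (by simpa using Submodule.finrank_le C)
  obtain ⟨S, -, hS⟩ := exists_subset_card_eq (s := (univ : Finset ι)) (n := k - 1)
    (by rw [card_univ]; omega)
  obtain ⟨c, hcC, hc0, hcS⟩ := exists_ne_zero_forall_eq_zero_of_card_lt_finrank C S (by omega)
  have := hammingNorm_le_card_sub_of_forall_eq_zero hcS
  exact ⟨c, hcC, hc0, by omega⟩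

theorem finrank_le_of_forall_le_hammingNorm [DecidableEq F] (C : Submodule F (ι → F)) {d : ℕ}
    (hd : ∀ c ∈ C, c ≠ 0 → d ≤ hammingNorm c) : finrank F C ≤ Fintype.card ι + 1 - d := by
  by_contra! h
  obtain ⟨c, hcC, hc0, hc⟩ := exists_ne_zero_hammingNorm_add_le C (by omega) le_rfl
  have := hd c hcC hc0
  omega

end HammingWeight

lemma Matrix.eq_zero_of_forall_sum_mul_pow_eq_zero {ι R : Type*} [Fintype ι] [CommRing R]
    [IsDomain R] {f v : ι → R} (hf : Function.Injective f)
    (hfv : ∀ m < Fintype.card ι, ∑ j, v j * f j ^ m = 0) : v = 0 := by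
  let e := (Fintype.equivFin ι).symm
  have : v ∘ e = 0 := Matrix.eq_zero_of_forall_pow_sum_mul_pow_eq_zero (hf.comp e.injective)
    fun m => (e.sum_comp fun j => v j * f j ^ (m : ℕ)).trans (hfv m m.isLt)
  funext j
  simpa using congrFun this (e.symm j)

lemma pow_eq_neg_one_of_orderOf_eq_two_mul {R : Type*} [CommRing R] [IsDomain R] {x : R}
    {a : ℕ} (h : orderOf x = 2 * a) (ha : a ≠ 0) : x ^ a = -1 := by
  have := (IsPrimitiveRoot.orderOf x).pow_of_dvd ha (h ▸ dvd_mul_left a 2)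
  rw [h, Nat.mul_div_cancel _ (Nat.pos_of_ne_zero ha)] at this
  exact this.eq_neg_one_of_two_right

lemma finrank_le_finrank_biInf_ker_add_sum {K V W ι : Type*} [Field K] [AddCommGroup V]
    [Module K V] [FiniteDimensional K V] [AddCommGroup W] [Module K W]
    (S : Finset ι) (f : ι → V →ₗ[K] W) :
    finrank K V ≤ finrank K ↥(⨅ s ∈ S, LinearMap.ker (f s)) +
      ∑ s ∈ S, finrank K (LinearMap.range (f s)) := by
  classical
  induction S using Finset.induction_on with
  | empty =>
    rw [show ⨅ s ∈ (∅ : Finset ι), LinearMap.ker (f s) = ⊤ by simp, finrank_top]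
    omega
  | insert x S hx ih =>
    rw [Finset.iInf_insert, sum_insert hx]
    have h1 := Submodule.finrank_sup_add_finrank_inf_eq (LinearMap.ker (f x))
      (⨅ s ∈ S, LinearMap.ker (f s))
    have h2 := (f x).finrank_range_add_finrank_ker
    have h3 := Submodule.finrank_le (LinearMap.ker (f x) ⊔ ⨅ s ∈ S, LinearMap.ker (f s))
    omega

section BCH

variable {F E : Type*} [Field F] [Field E] [Algebra F E] {n : ℕ} {α : E}

lemma bchCheck_apply (s : ℕ) (c : Fin n → F) :
    bchCheck F E n α s c = ∑ j : Fin n, c j • α ^ (s * j) := rfl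

lemma mem_bchCode {Z : Set ℕ} {c : Fin n → F} :
    c ∈ bchCode F E n α Z ↔ ∀ s ∈ Z, bchCheck F E n α s c = 0 := by
  simp [bchCode]

lemma bchCode_anti {Z Z' : Set ℕ} (h : Z ⊆ Z') : bchCode F E n α Z' ≤ bchCode F E n α Z :=
  fun _ hc => mem_bchCode.2 fun s hs => mem_bchCode.1 hc s (h hs)

lemma bchCheck_mod (hα : orderOf α = n) (s : ℕ) :
    bchCheck F E n α (s % n) = bchCheck F E n α s := by
  subst hα
  refine LinearMap.ext fun c => ?_
  simp only [bchCheck_apply, pow_mul, pow_mod_orderOf]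

lemma bchCheck_mul_card [Fintype F] (s : ℕ) (c : Fin n → F) :
    bchCheck F E n α (s * Fintype.card F) c = bchCheck F E n α s c ^ Fintype.card F := by
  show _ = FiniteField.frobeniusAlgHom F E (bchCheck F E n α s c)
  simp [bchCheck_apply, mul_right_comm s, pow_mul]

lemma bchCheck_mul_card_pow [Fintype F] (s k : ℕ) (c : Fin n → F) :
    bchCheck F E n α (s * Fintype.card F ^ k) c = bchCheck F E n α s c ^ Fintype.card F ^ k := by
  induction k with
  | zero => simp
  | succ k ih => rw [pow_succ, ← mul_assoc, bchCheck_mul_card, ih, ← pow_mul, ← pow_succ]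

lemma bchCheck_eq_zero_of_mem_cyclotomicCoset [Fintype F] (hα : orderOf α = n) {s x : ℕ}
    (hx : x ∈ cyclotomicCoset (Fintype.card F) n s) {c : Fin n → F}
    (hc : bchCheck F E n α s c = 0) : bchCheck F E n α x c = 0 := by
  obtain ⟨k, rfl⟩ := hx
  rw [bchCheck_mod hα, bchCheck_mul_card_pow, hc, zero_pow (by positivity)]

theorem bchCode_iUnion_cyclotomicCoset [Fintype F] (hα : orderOf α = n) {ι : Type*}
    (J : Set ι) (f : ι → ℕ) :
    bchCode F E n α (⋃ j ∈ J, cyclotomicCoset (Fintype.card F) n (f j)) =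
      bchCode F E n α (f '' J) := by
  ext c
  simp only [mem_bchCode, Set.mem_iUnion, Set.forall_mem_image]
  constructor
  · intro h j hj
    rw [← bchCheck_mod hα]
    exact h _ ⟨j, hj, 0, by simp⟩
  · rintro h x ⟨j, hj, hx⟩
    exact bchCheck_eq_zero_of_mem_cyclotomicCoset hα hx (h hj)

theorem bch_bound [DecidableEq F] (hα : orderOf α = n) {b δ : ℕ} {c : Fin n → F}
    (hc : c ∈ bchCode F E n α (Set.Ico b (b + δ))) (hc0 : c ≠ 0) : δ < hammingNorm c := by
  by_contra! hw
  obtain ⟨j₀, hj₀⟩ : ∃ j, c j ≠ 0 := Function.ne_iff.1 hc0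
  have hα0 : α ≠ 0 :=
    ne_zero_pow j₀.pos.ne' (by rw [← hα, pow_orderOf_eq_one]; exact one_ne_zero)
  let J : Finset (Fin n) := {j | c j ≠ 0}
  have hJ : Fintype.card J = hammingNorm c := Fintype.card_coe J
  have hv := Matrix.eq_zero_of_forall_sum_mul_pow_eq_zero (ι := J) (f := fun j => α ^ (j : ℕ))
    (v := fun j => c j • α ^ (b * j)) ?inj ?sum
  · have := congrFun hv ⟨j₀, by simp [J, hj₀]⟩
    simp [hα0] at this
    exact hj₀ this
  case inj =>
    intro j k hjk
    exact Subtype.ext (Fin.ext (pow_injOn_Iio_orderOf (by simp [hα]) (by simp [hα]) hjk))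
  case sum =>
    intro m hm
    have hcheck := mem_bchCode.1 hc (b + m) ⟨by omega, by omega⟩
    rw [bchCheck_apply, ← sum_filter_of_ne (p := fun j => c j ≠ 0)
      (fun j _ h => left_ne_zero_of_smul h), ← sum_coe_sort] at hcheck
    rw [← hcheck]
    refine sum_congr rfl fun j _ => ?_
    simp only [smul_mul_assoc, ← pow_mul, ← pow_add]
    ring_nf

lemma finrank_range_bchCheck_le_one {s : ℕ} {β : F} (h : α ^ s = algebraMap F E β) :
    finrank F (LinearMap.range (bchCheck F E n α s)) ≤ 1 := by
  have : bchCheck F E n α s = (Algebra.linearMap F E).comp (bchCheck F F n β 1) := by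
    ext c
    simp [bchCheck_apply, pow_mul, h, Algebra.smul_def, map_sum]
  rw [this, LinearMap.range_comp]
  exact (Submodule.finrank_map_le _ _).trans ((Submodule.finrank_le _).trans (finrank_self F).le)

lemma le_finrank_bchCode_Icc_add {a i : ℕ} (hE : finrank F E = 2) (hαa : α ^ a = -1)
    (hi : i ≤ a) : n ≤ finrank F (bchCode F E n α (Set.Icc (a - i) a)) + (2 * i + 1) := by
  have : FiniteDimensional F E := Module.finite_of_finrank_eq_succ hE
  have hcodim := finrank_le_finrank_biInf_ker_add_sum (Finset.Icc (a - i) a) (bchCheck F E n α)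
  rw [finrank_fin_fun] at hcodim
  have hsum : ∑ s ∈ Finset.Icc (a - i) a, finrank F (LinearMap.range (bchCheck F E n α s))
      ≤ 2 * i + 1 := by
    rw [← Finset.Ico_insert_right (by omega), sum_insert (by simp)]
    have h₁ := finrank_range_bchCheck_le_one (n := n) (α := α) (s := a) (β := (-1 : F))
      (by simp [hαa])
    have h₂ := sum_le_card_nsmul (Finset.Ico (a - i) a) _ 2 fun s _ => hE ▸
      Submodule.finrank_le (LinearMap.range (bchCheck F E n α s))
    rw [Nat.card_Ico, smul_eq_mul] at h₂
    omega
  have hcode : bchCode F E n α (Set.Icc (a - i) a) =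
      ⨅ s ∈ Finset.Icc (a - i) a, LinearMap.ker (bchCheck F E n α s) := by
    simp [bchCode]
  rw [hcode]
  omega

end BCH

lemma Icc_subset_iUnion_cyclotomicCoset {q n a i : ℕ} (hn : n = q + 1) (ha : n = 2 * a)
    (hi : i < a) : Set.Icc (a - i) (a + i) ⊆ ⋃ j ∈ Set.Iic i, cyclotomicCoset q n (a - j) := by
  rintro s ⟨hs₁, hs₂⟩
  simp only [Set.mem_iUnion, Set.mem_Iic]
  rcases le_or_gt s a with hs | hs
  · exact ⟨a - s, by omega, 0, by rw [pow_zero, mul_one, Nat.mod_eq_of_lt (by omega)]; omega⟩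
  · obtain ⟨j, rfl⟩ : ∃ j, s = a + j := ⟨s - a, by omega⟩
    refine ⟨j, by omega, 1, ?_⟩
    obtain ⟨k, rfl⟩ : ∃ k, a = j + 1 + k := ⟨a - j - 1, by omega⟩
    have : (j + 1 + k - j) * q = (j + 1 + k + j) + n * k := by
      rw [show j + 1 + k - j = k + 1 by omega]
      zify at hn ha ⊢
      linear_combination -(k + 1 : ℤ) * hn + ha
    rw [pow_one, this, Nat.add_mul_mod_self_left, Nat.mod_eq_of_lt (by omega)]

theorem bch_code_mds_odd_case_general (p t q n a i : ℕ) (hodd : Odd p)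
    (hq : q = p ^ t) (hn : n = q + 1) (ha : a = n / 2)
    (hi2 : i ≤ a - 1)
    (F E : Type*) [Field F] [Fintype F] [DecidableEq F] [Field E] [Fintype E]
    [Algebra F E] (hF : Fintype.card F = q) (hE : Fintype.card E = q ^ 2)
    (α : E) (hα : orderOf α = n)
    (C : Submodule F (Fin n → F))
    (hC : C = bchCode F E n α (⋃ j ∈ Set.Iic i, cyclotomicCoset q n (a - j))) :
    -- the generator polynomial has degree 2i+1, equivalently:
    Module.finrank F C = n - (2 * i + 1) ∧
    (∀ c ∈ C, c ≠ 0 → 2 * i + 2 ≤ hammingNorm c) ∧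
    (∃ c ∈ C, c ≠ 0 ∧ hammingNorm c = 2 * i + 2) ∧
    2 * i + 2 = n - (n - 2 * i - 1) + 1 := by
  have hq2 : 2 ≤ q := hF ▸ Fintype.one_lt_card
  have hna : n = 2 * a := by obtain ⟨m, hm⟩ := hq ▸ hodd.pow (n := t); omega
  have hia : i < a := by omega
  have hαa : α ^ a = -1 := pow_eq_neg_one_of_orderOf_eq_two_mul (hα.trans hna) (by omega)
  have hE2 : finrank F E = 2 :=
    Nat.pow_right_injective hq2 <| show q ^ finrank F E = q ^ 2 by
      rw [← hF, ← card_eq_pow_finrank, hE, hF]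
  have hconsec : Set.Ico (a - i) (a - i + (2 * i + 1)) ⊆
      ⋃ j ∈ Set.Iic i, cyclotomicCoset q n (a - j) := fun s hs =>
    Icc_subset_iUnion_cyclotomicCoset hn hna hia ⟨hs.1, by have := hs.2; omega⟩
  have hdist : ∀ c ∈ C, c ≠ 0 → 2 * i + 2 ≤ hammingNorm c := fun c hc hc0 =>
    bch_bound hα (bchCode_anti hconsec (hC ▸ hc)) hc0
  have hlow : n ≤ finrank F C + (2 * i + 1) := by
    have hreps : (a - ·) '' Set.Iic i = Set.Icc (a - i) a := by
      ext s; simp only [Set.mem_image, Set.mem_Iic, Set.mem_Icc]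
      exact ⟨by omega, fun hs => ⟨a - s, by omega, by omega⟩⟩
    rw [hC, ← hF, bchCode_iUnion_cyclotomicCoset hα, hreps]
    exact le_finrank_bchCode_Icc_add hE2 hαa hia.le
  have hup := finrank_le_of_forall_le_hammingNorm C hdist
  rw [Fintype.card_fin] at hup
  obtain ⟨c, hcC, hc0, hc⟩ :=
    exists_ne_zero_hammingNorm_add_le C (k := n - (2 * i + 1)) (by omega) (by omega)
  rw [Fintype.card_fin] at hc
  exact ⟨by omega, hdist, ⟨c, hcC, hc0, le_antisymm (by omega) (hdist c hcC hc0)⟩, by omega⟩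

theorem bch_code_mds_odd_case (p t q n a i : ℕ) (hp : p.Prime) (hodd : Odd p)
    (ht : 2 ≤ t) (hq : q = p ^ t) (hn : n = q + 1) (ha : a = n / 2)
    (hi1 : 2 ≤ i) (hi2 : i ≤ a - 1)
    (F E : Type*) [Field F] [Fintype F] [DecidableEq F] [Field E] [Fintype E]
    [Algebra F E] (hF : Fintype.card F = q) (hE : Fintype.card E = q ^ 2)
    (α : E) (hα : orderOf α = n)
    (C : Submodule F (Fin n → F))
    (hC : C = bchCode F E n α (⋃ j ∈ Set.Iic i, cyclotomicCoset q n (a - j))) :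
    -- the generator polynomial has degree 2i+1, equivalently:
    Module.finrank F C = n - (2 * i + 1) ∧
    (∀ c ∈ C, c ≠ 0 → 2 * i + 2 ≤ hammingNorm c) ∧
    (∃ c ∈ C, c ≠ 0 ∧ hammingNorm c = 2 * i + 2) ∧
    2 * i + 2 = n - (n - 2 * i - 1) + 1 :=
  bch_code_mds_odd_case_general p t q n a i hodd hq hn ha hi2 F E hF hE α hα C hC
end

section
/- Let q = p^t with p an odd prime and t ≥ 2, n = q+1, and a = n/2. For each 3 ≤ i ≤ a−1, there exists a memory-two convolutional code over F_q with parameters (n, 2i−3, 4; 2, d_f) whose free distance satisfies d_f ≥ n − 2i. -/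
/-
Let `k = 2i - 3`. The evaluations `g s` of the monomials `X ^ s`, `s ≤ k + 1`, at the `q + 1`
points of the projective line generate a doubly extended Reed–Solomon code, whose nonzero words
have at most `k + 1` zeros. The generator with rows `g r + D² g (r + k)` for `r < 2` and `g r`
for `2 ≤ r < k` has degree `4` and memory `2`, and each coefficient vector of one of its codewords
is a Reed–Solomon word; a nonzero codeword thus has weight at least `n - (k + 1)`.
The matrix with rows `g 0, …, g (k + 1)` has a right inverse over `F`, which makes the
generator basic. It is reduced because the minor on `k` columns at nonzero points `y c` has degree
exactly `4`: its `X ^ 4` coefficient is a row permutation of `(y c ^ (r + 2))`, a Vandermonde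
matrix with scaled columns, while a change of basic generator multiplies maximal minors by a unit
and the degree of a generator bounds the degrees of its maximal minors.
-/

/-- The convolutional code generated by the polynomial matrix `G`. -/
def convCode {F : Type*} [Field F] {k n : ℕ}
    (G : Matrix (Fin k) (Fin n) (Polynomial F)) : Set (Fin n → Polynomial F) :=
  {v | ∃ u : Fin k → Polynomial F, ∀ j, v j = ∑ i : Fin k, u i * G i j}

/-- A polynomial generator matrix is basic if it has a polynomial right inverse. -/
def isBasic {F : Type*} [Field F] {k n : ℕ}
    (G : Matrix (Fin k) (Fin n) (Polynomial F)) : Prop :=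
  ∃ R : Matrix (Fin n) (Fin k) (Polynomial F), G * R = 1

/-- The `i`-th constraint length: the maximal degree in row `i`. -/
def rowDegree {F : Type*} [Field F] {k n : ℕ}
    (G : Matrix (Fin k) (Fin n) (Polynomial F)) (i : Fin k) : ℕ :=
  Finset.univ.sup fun j => (G i j).natDegree

/-- The degree (overall constraint length) `γ = ∑ γ_i` of a generator matrix. -/
def convDegree {F : Type*} [Field F] {k n : ℕ}
    (G : Matrix (Fin k) (Fin n) (Polynomial F)) : ℕ :=
  ∑ i : Fin k, rowDegree G i

/-- The memory `m = max γ_i` of a generator matrix. -/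
def convMemory {F : Type*} [Field F] {k n : ℕ}
    (G : Matrix (Fin k) (Fin n) (Polynomial F)) : ℕ :=
  Finset.univ.sup fun i => rowDegree G i

/-- A basic generator matrix is reduced if its overall constraint length is minimal
among all basic generator matrices of the same code. -/
def isReduced {F : Type*} [Field F] {k n : ℕ}
    (G : Matrix (Fin k) (Fin n) (Polynomial F)) : Prop :=
  isBasic G ∧ ∀ G' : Matrix (Fin k) (Fin n) (Polynomial F),
    isBasic G' → convCode G' = convCode G → convDegree G ≤ convDegree G'

/-- The weight of `v(D) ∈ F[D]^n`: the total number of nonzero coefficients. -/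
def polyWeight {F : Type*} [Field F] [DecidableEq F] {n : ℕ}
    (v : Fin n → Polynomial F) : ℕ :=
  ∑ j : Fin n, (v j).support.card

open Polynomial Finset

namespace Polynomial

variable {R ι : Type*} [CommSemiring R]

theorem coeff_prod_sum_of_natDegree_le (s : Finset ι) (f : ι → R[X]) (d : ι → ℕ)
    (h : ∀ i ∈ s, (f i).natDegree ≤ d i) :
    (∏ i ∈ s, f i).coeff (∑ i ∈ s, d i) = ∏ i ∈ s, (f i).coeff (d i) := by
  classical
  induction s using Finset.induction_on with
  | empty => simp
  | insert a s ha ih =>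
    have hprod : (∏ i ∈ s, f i).natDegree ≤ ∑ i ∈ s, d i :=
      (natDegree_prod_le s f).trans (sum_le_sum fun i hi => h i (mem_insert_of_mem hi))
    rw [prod_insert ha, sum_insert ha, prod_insert ha,
      coeff_mul_add_eq_of_natDegree_le (h a (mem_insert_self a s)) hprod,
      ih fun i hi => h i (mem_insert_of_mem hi)]

end Polynomial

namespace Matrix

theorem exists_mul_eq_one_of_vecMul_injective {m n K : Type*} [Fintype m] [Fintype n]
    [DecidableEq m] [Field K] {A : Matrix m n K} (h : Function.Injective A.vecMul) :
    ∃ B : Matrix n m K, A * B = 1 := by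
  refine mulVec_surjective_iff_exists_right_inverse.mp ?_
  have hrank : A.rank = Fintype.card m := (vecMul_injective_iff.mp h).rank_matrix
  have hrange : LinearMap.range A.mulVecLin = ⊤ :=
    Submodule.eq_top_of_finrank_eq (by rw [← rank, hrank, Module.finrank_fintype_fun_eq_card])
  exact LinearMap.range_eq_top.mp hrange

variable {R n : Type*} [CommRing R] [Fintype n] [DecidableEq n]

theorem natDegree_det_le_sum (M : Matrix n n R[X]) (d : n → ℕ)
    (h : ∀ r c, (M r c).natDegree ≤ d r) : M.det.natDegree ≤ ∑ r, d r := by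
  rw [det_apply]
  refine natDegree_sum_le_of_forall_le _ _ fun σ _ => ?_
  rw [Units.smul_def, zsmul_eq_mul]
  refine natDegree_mul_le.trans ?_
  rw [natDegree_intCast, zero_add, ← Equiv.sum_comp σ d]
  exact (natDegree_prod_le _ _).trans (sum_le_sum fun c _ => h (σ c) c)

theorem coeff_det_sum_of_natDegree_le (M : Matrix n n R[X]) (d : n → ℕ)
    (h : ∀ r c, (M r c).natDegree ≤ d r) :
    M.det.coeff (∑ r, d r) = (Matrix.of fun r c => (M r c).coeff (d r)).det := by
  rw [det_apply, det_apply, finsetSum_coeff]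
  refine sum_congr rfl fun σ _ => ?_
  rw [Units.smul_def, Units.smul_def, coeff_smul, ← Equiv.sum_comp σ d,
    coeff_prod_sum_of_natDegree_le _ _ _ fun c _ => h (σ c) c]
  rfl

theorem det_of_pow_add_two_ne_zero {F : Type*} [Field F] {k : ℕ} {y : Fin k → F}
    (hy : Function.Injective y) (hy0 : ∀ c, y c ≠ 0) :
    (of fun (r c : Fin k) => y c ^ ((r : ℕ) + 2)).det ≠ 0 := by
  have hfactor : (of fun (r c : Fin k) => y c ^ ((r : ℕ) + 2)) =
      (vandermonde y).transpose * diagonal fun c => y c ^ 2 := by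
    ext r c
    simp [mul_diagonal, vandermonde_apply, pow_add]
  rw [hfactor, det_mul, det_transpose, det_diagonal]
  exact mul_ne_zero (det_vandermonde_ne_zero_iff.mpr hy)
    (prod_ne_zero_iff.mpr fun c _ => pow_ne_zero _ (hy0 c))

end Matrix

theorem Fin.sum_ite_val_lt_two {k : ℕ} (hk : 2 ≤ k) :
    ∑ r : Fin k, (if (r : ℕ) < 2 then 2 else 0) = 4 := by
  obtain ⟨m, rfl⟩ := Nat.exists_eq_add_of_le hk
  rw [Fin.sum_univ_eq_sum_range (fun r => if r < 2 then 2 else 0), sum_range_add,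
    sum_eq_zero (s := range m) fun i _ => if_neg (by omega)]
  rfl

section ProjectiveLine

variable {F : Type*} [Field F]

/-- Evaluation at a point of the projective line `Option F` (with `none` the point at infinity),
treating polynomials as homogeneous forms of degree `d`. -/
noncomputable def projEval (d : ℕ) : Option F → F[X] →ₗ[F] F
  | none => lcoeff F d
  | some z => leval z

@[simp]
theorem projEval_none (d : ℕ) (f : F[X]) : projEval d none f = f.coeff d := rfl

@[simp]
theorem projEval_some (d : ℕ) (z : F) (f : F[X]) : projEval d (some z) f = f.eval z := rfl

theorem card_filter_projEval_eq_zero_le [DecidableEq F] {ι : Type*} [Fintype ι] {d : ℕ}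
    {α : ι → Option F} (hα : Function.Injective α) {f : F[X]} (hf : f ≠ 0) (hd : f.natDegree ≤ d) :
    #{j | projEval d (α j) f = 0} ≤ d := by
  set roots : Finset (Option F) := f.roots.toFinset.image some
  have hroots : #roots ≤ f.natDegree :=
    card_image_le.trans (f.roots.toFinset_card_le.trans f.card_roots')
  have hzero : ∀ j, projEval d (α j) f = 0 → α j = none ∨ α j ∈ roots := by
    intro j hj
    match h : α j, hj with
    | none, _ => exact Or.inl rfl
    | some z, hz => exact Or.inr (mem_image_of_mem _ (by simpa [hf] using hz))
  by_cases htop : f.coeff d = 0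
  · have hlt : f.natDegree < d :=
      lt_of_le_of_ne hd fun h => hf (leadingCoeff_eq_zero.mp (by rwa [leadingCoeff, h]))
    have hmaps : ∀ j ∈ ({j | projEval d (α j) f = 0} : Finset ι), α j ∈ insert none roots :=
      fun j hj => mem_insert.mpr (hzero j (mem_filter.mp hj).2)
    calc _ ≤ #(insert none roots) := card_le_card_of_injOn α hmaps hα.injOn
      _ ≤ #roots + 1 := card_insert_le _ _
      _ ≤ d := by omega
  · have hmaps : ∀ j ∈ ({j | projEval d (α j) f = 0} : Finset ι), α j ∈ roots := by
      intro j hj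
      refine (hzero j (mem_filter.mp hj).2).resolve_left fun hnone => htop ?_
      simpa [hnone] using (mem_filter.mp hj).2
    exact (card_le_card_of_injOn α hmaps hα.injOn).trans (hroots.trans hd)

theorem exists_projEval_mul_eq_one [DecidableEq F] {ι : Type*} [Fintype ι] {d : ℕ}
    {α : ι → Option F} (hα : Function.Injective α) (hd : d < Fintype.card ι) :
    ∃ R : Matrix ι (Fin (d + 1)) F,
      (Matrix.of fun (s : Fin (d + 1)) j => projEval d (α j) (X ^ (s : ℕ))) * R = 1 := by
  refine Matrix.exists_mul_eq_one_of_vecMul_injective ?_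
  rw [← Matrix.coe_vecMulLinear, injective_iff_map_eq_zero]
  intro c hc
  set f : F[X] := ∑ s, c s • X ^ (s : ℕ)
  have hzero : ∀ j, projEval d (α j) f = 0 := by
    intro j
    simpa [f, Matrix.vecMul, dotProduct, map_sum, mul_comm] using congrFun hc j
  have hf : f = 0 := by
    by_contra hf
    have hdeg : f.natDegree ≤ d := natDegree_sum_le_of_forall_le _ _ fun s _ =>
      (natDegree_smul_le _ _).trans ((natDegree_X_pow_le _).trans (Nat.lt_succ_iff.mp s.isLt))
    have := card_filter_projEval_eq_zero_le hα hf hdeg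
    rw [filter_true_of_mem fun j _ => hzero j, card_univ] at this
    omega
  funext s
  simpa [f, finsetSum_coeff, coeff_X_pow, Fin.val_eq_val] using congrArg (coeff · s) hf

end ProjectiveLine

section ConvolutionalCode
variable {F : Type*} [Field F] {k n : ℕ}

theorem card_filter_coeff_ne_zero_le_polyWeight [DecidableEq F] (v : Fin n → F[X]) (ℓ : ℕ) :
    #{j | (v j).coeff ℓ ≠ 0} ≤ polyWeight v :=
  calc #{j | (v j).coeff ℓ ≠ 0} = ∑ _j ∈ {j | (v j).coeff ℓ ≠ 0}, 1 := card_eq_sum_ones _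
    _ ≤ ∑ j ∈ {j | (v j).coeff ℓ ≠ 0}, #(v j).support :=
      sum_le_sum fun _ hj => card_pos.mpr ⟨ℓ, mem_support_iff.mpr (mem_filter.mp hj).2⟩
    _ ≤ polyWeight v := sum_le_sum_of_subset (filter_subset _ _)

theorem row_mem_convCode (G : Matrix (Fin k) (Fin n) F[X]) (r : Fin k) : G r ∈ convCode G :=
  ⟨Pi.single r 1, fun j => by simp [Pi.single_apply, ite_mul]⟩

theorem exists_eq_mul_of_convCode_subset {G₁ G₂ : Matrix (Fin k) (Fin n) F[X]}
    (h : convCode G₁ ⊆ convCode G₂) : ∃ U : Matrix (Fin k) (Fin k) F[X], G₁ = U * G₂ := by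
  choose U hU using fun r => h (row_mem_convCode G₁ r)
  exact ⟨Matrix.of U, Matrix.ext fun r j => hU r j⟩

theorem isUnit_det_of_convCode_subset {G G' : Matrix (Fin k) (Fin n) F[X]} (hG : isBasic G)
    (h : convCode G ⊆ convCode G') {U : Matrix (Fin k) (Fin k) F[X]} (hU : G' = U * G) :
    IsUnit U.det := by
  obtain ⟨R, hR⟩ := hG
  obtain ⟨U', hU'⟩ := exists_eq_mul_of_convCode_subset h
  refine Matrix.isUnit_det_of_left_inverse (B := U') ?_
  calc U' * U = U' * U * (G * R) := by rw [hR, Matrix.mul_one]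
    _ = G * R := by rw [← Matrix.mul_assoc, Matrix.mul_assoc U', ← hU, ← hU']
    _ = 1 := hR

theorem natDegree_det_submatrix_le_convDegree (G : Matrix (Fin k) (Fin n) F[X])
    (S : Fin k → Fin n) : (G.submatrix id S).det.natDegree ≤ convDegree G :=
  Matrix.natDegree_det_le_sum _ _ fun r c =>
    le_sup (f := fun j => (G r j).natDegree) (mem_univ (S c))

theorem isReduced_of_le_natDegree_det {G : Matrix (Fin k) (Fin n) F[X]} (hG : isBasic G)
    (S : Fin k → Fin n) (hS : convDegree G ≤ (G.submatrix id S).det.natDegree) :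
    isReduced G := by
  refine ⟨hG, fun G' _ hcode => ?_⟩
  obtain ⟨U, hU⟩ := exists_eq_mul_of_convCode_subset hcode.le
  obtain ⟨c, hc, hcU⟩ := Polynomial.isUnit_iff.mp (isUnit_det_of_convCode_subset hG hcode.ge hU)
  have hminor : G'.submatrix id S = U * G.submatrix id S := by rw [hU]; rfl
  calc convDegree G ≤ (G.submatrix id S).det.natDegree := hS
    _ = (G'.submatrix id S).det.natDegree := by
      rw [hminor, Matrix.det_mul, ← hcU, natDegree_C_mul_of_isUnit hc]
    _ ≤ convDegree G' := natDegree_det_submatrix_le_convDegree G' S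

end ConvolutionalCode

section MemoryTwo
variable {F : Type*} [Field F] {k n : ℕ}

/-- Row `r` is `g r + [r < 2] D² g (r + k)`, where `g s` is the vector of values of `X ^ s` at the
points `α j` of the projective line. -/
noncomputable def memoryTwoGenerator (k : ℕ) (α : Fin n → Option F) :
    Matrix (Fin k) (Fin n) F[X] :=
  Matrix.of fun r j => C (projEval (k + 1) (α j) (X ^ (r : ℕ))) +
    if (r : ℕ) < 2 then C (projEval (k + 1) (α j) (X ^ ((r : ℕ) + k))) * X ^ 2 else 0

variable {α : Fin n → Option F}

theorem memoryTwoGenerator_apply_of_eq_some {j : Fin n} {z : F} (h : α j = some z) (r : Fin k) :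
    memoryTwoGenerator k α r j =
      C (z ^ (r : ℕ)) + if (r : ℕ) < 2 then C (z ^ ((r : ℕ) + k)) * X ^ 2 else 0 := by
  simp [memoryTwoGenerator, h]

theorem natDegree_memoryTwoGenerator_le (r : Fin k) (j : Fin n) :
    (memoryTwoGenerator k α r j).natDegree ≤ if (r : ℕ) < 2 then 2 else 0 := by
  by_cases hr : (r : ℕ) < 2 <;> simp only [memoryTwoGenerator, Matrix.of_apply, hr, if_true,
    if_false, add_zero, natDegree_C, le_refl]
  compute_degree

theorem rowDegree_memoryTwoGenerator {j : Fin n} {z : F} (hj : α j = some z) (hz : z ≠ 0)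
    (r : Fin k) : rowDegree (memoryTwoGenerator k α) r = if (r : ℕ) < 2 then 2 else 0 := by
  refine le_antisymm (Finset.sup_le fun j _ => natDegree_memoryTwoGenerator_le r j) ?_
  split_ifs with hr
  · refine (le_natDegree_of_ne_zero ?_).trans
      (le_sup (f := fun j => (memoryTwoGenerator k α r j).natDegree) (mem_univ j))
    rw [memoryTwoGenerator_apply_of_eq_some hj, if_pos hr, coeff_add, coeff_C_mul_X_pow, coeff_C]
    simp [hz]
  · exact Nat.zero_le _

theorem convDegree_memoryTwoGenerator (hk : 2 ≤ k) {j : Fin n} {z : F} (hj : α j = some z)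
    (hz : z ≠ 0) : convDegree (memoryTwoGenerator k α) = 4 := by
  simp only [convDegree, rowDegree_memoryTwoGenerator hj hz, Fin.sum_ite_val_lt_two hk]

theorem convMemory_memoryTwoGenerator (hk : 1 ≤ k) {j : Fin n} {z : F} (hj : α j = some z)
    (hz : z ≠ 0) : convMemory (memoryTwoGenerator k α) = 2 := by
  refine le_antisymm (Finset.sup_le fun r _ => ?_) ?_
  · rw [rowDegree_memoryTwoGenerator hj hz]
    split_ifs <;> omega
  · refine le_trans ?_ (le_sup (f := fun r => rowDegree _ r) (mem_univ ⟨0, hk⟩))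
    simp [rowDegree_memoryTwoGenerator hj hz]

theorem isBasic_memoryTwoGenerator [DecidableEq F] (hα : Function.Injective α) (hn : k + 2 ≤ n) :
    isBasic (memoryTwoGenerator k α) := by
  obtain ⟨R, hR⟩ := exists_projEval_mul_eq_one (d := k + 1) hα (by rw [Fintype.card_fin]; omega)
  have hrow : ∀ (s : Fin (k + 2)) (r' : Fin k),
      ∑ j, C (projEval (k + 1) (α j) (X ^ (s : ℕ))) * C (R j (Fin.castAdd 2 r')) =
        C ((1 : Matrix (Fin (k + 2)) (Fin (k + 2)) F) s (Fin.castAdd 2 r')) := by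
    intro s r'
    simp_rw [← C_mul, ← map_sum, ← hR, Matrix.mul_apply, Matrix.of_apply]
  refine ⟨Matrix.of fun j r => C (R j (Fin.castAdd 2 r)), Matrix.ext fun r r' => ?_⟩
  simp only [Matrix.mul_apply, memoryTwoGenerator, Matrix.of_apply, add_mul, sum_add_distrib]
  have hconst := hrow (Fin.castAdd 2 r) r'
  rw [Fin.val_castAdd] at hconst
  rw [hconst]
  split_ifs with hr
  · simp_rw [mul_right_comm _ (X ^ 2), ← sum_mul]
    rw [hrow ⟨r + k, by omega⟩ r']
    have := r'.isLt
    simp [Matrix.one_apply, Fin.ext_iff]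
    omega
  · simp [Matrix.one_apply]

noncomputable def memoryTwoMessage (u : Fin k → F[X]) (ℓ : ℕ) : F[X] :=
  ∑ r : Fin k, ((u r).coeff ℓ • X ^ (r : ℕ) +
    if (r : ℕ) < 2 then (u r * X ^ 2).coeff ℓ • X ^ ((r : ℕ) + k) else 0)

theorem natDegree_memoryTwoMessage_le (u : Fin k → F[X]) (ℓ : ℕ) :
    (memoryTwoMessage u ℓ).natDegree ≤ k + 1 := by
  refine natDegree_sum_le_of_forall_le _ _ fun r _ => ?_
  have := r.isLt
  split_ifs with hr
  · refine natDegree_add_le_of_degree_le ?_ ?_ <;>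
      exact (natDegree_smul_le _ _).trans ((natDegree_X_pow_le _).trans (by omega))
  · rw [add_zero]
    exact (natDegree_smul_le _ _).trans ((natDegree_X_pow_le _).trans (by omega))

theorem coeff_sum_mul_memoryTwoGenerator (u : Fin k → F[X]) (j : Fin n) (ℓ : ℕ) :
    (∑ r, u r * memoryTwoGenerator k α r j).coeff ℓ =
      projEval (k + 1) (α j) (memoryTwoMessage u ℓ) := by
  simp only [memoryTwoMessage, map_sum, finsetSum_coeff]
  refine sum_congr rfl fun r _ => ?_
  split_ifs with hr <;> simp only [memoryTwoGenerator, Matrix.of_apply, hr, if_true, if_false,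
    mul_add, coeff_add, map_add, map_smul, smul_eq_mul, add_zero, coeff_mul_C]
  rw [← mul_assoc, mul_right_comm, coeff_mul_C]

theorem le_polyWeight_of_mem_convCode_memoryTwoGenerator [DecidableEq F]
    (hα : Function.Injective α) {v : Fin n → F[X]} (hv : v ∈ convCode (memoryTwoGenerator k α))
    (hv0 : v ≠ 0) : n - (k + 1) ≤ polyWeight v := by
  obtain ⟨u, hu⟩ := hv
  obtain ⟨j₀, ℓ, hℓ⟩ : ∃ j ℓ, (v j).coeff ℓ ≠ 0 := by
    by_contra! h
    exact hv0 (funext fun j => Polynomial.ext fun ℓ => by simp [h j ℓ])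
  have hcoeff : ∀ j, (v j).coeff ℓ = projEval (k + 1) (α j) (memoryTwoMessage u ℓ) := fun j => by
    rw [hu j, coeff_sum_mul_memoryTwoGenerator]
  have hm : memoryTwoMessage u ℓ ≠ 0 := fun h => hℓ (by rw [hcoeff, h, map_zero])
  have hzeros : #{j | (v j).coeff ℓ = 0} ≤ k + 1 := by
    simpa only [hcoeff] using
      card_filter_projEval_eq_zero_le hα hm (natDegree_memoryTwoMessage_le u ℓ)
  have hsplit := card_filter_add_card_filter_not (s := univ) fun j => (v j).coeff ℓ = 0
  have hweight := card_filter_coeff_ne_zero_le_polyWeight v ℓ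
  rw [card_univ, Fintype.card_fin] at hsplit
  simp only [ne_eq] at hweight
  omega

theorem natDegree_det_submatrix_memoryTwoGenerator (hk : 2 ≤ k) {y : Fin k → F}
    (hy : Function.Injective y) (hy0 : ∀ c, y c ≠ 0) {S : Fin k → Fin n}
    (hS : ∀ c, α (S c) = some (y c)) :
    ((memoryTwoGenerator k α).submatrix id S).det.natDegree = 4 := by
  have : NeZero k := ⟨by omega⟩
  set M := (memoryTwoGenerator k α).submatrix id S
  set d : Fin k → ℕ := fun r => if (r : ℕ) < 2 then 2 else 0
  have hbound : ∀ r c, (M r c).natDegree ≤ d r := fun r c => natDegree_memoryTwoGenerator_le r (S c)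
  have hsum : ∑ r, d r = 4 := Fin.sum_ite_val_lt_two hk
  -- rows `0, 1` lead with `y ^ k, y ^ (k + 1)` and the others with `y ^ 2, …, y ^ (k - 1)`
  have hlead : (Matrix.of fun r c => (M r c).coeff (d r)) =
      (Matrix.of fun (r c : Fin k) => y c ^ ((r : ℕ) + 2)).submatrix
        (Equiv.addRight ⟨k - 2, by omega⟩) id := by
    ext r c
    have hr := r.isLt
    simp only [Matrix.of_apply, Matrix.submatrix_apply, id, M, d,
      memoryTwoGenerator_apply_of_eq_some (hS c), Equiv.coe_addRight, Fin.val_add]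
    split_ifs with hr2
    · rw [Nat.mod_eq_of_lt (by omega), show (r : ℕ) + (k - 2) + 2 = r + k by omega, coeff_add,
        coeff_C_mul_X_pow, coeff_C, if_neg two_ne_zero, if_pos rfl, zero_add]
    · rw [show (r : ℕ) + (k - 2) = (r - 2) + k by omega, Nat.add_mod_right,
        Nat.mod_eq_of_lt (by omega), Nat.sub_add_cancel (by omega), add_zero, coeff_C_zero]
  refine le_antisymm (hsum ▸ Matrix.natDegree_det_le_sum M d hbound) (le_natDegree_of_ne_zero ?_)
  rw [← hsum, Matrix.coeff_det_sum_of_natDegree_le M d hbound, hlead, Matrix.det_permute]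
  refine mul_ne_zero ?_ (Matrix.det_of_pow_add_two_ne_zero hy hy0)
  rcases Int.units_eq_one_or (Equiv.Perm.sign (Equiv.addRight (⟨k - 2, by omega⟩ : Fin k))) with
    h | h <;> simp [h]

end MemoryTwo

theorem memory_two_convolutional_general (q n a : ℕ) (hn : n = q + 1) (ha : a = n / 2)
    (i : ℕ) (hi1 : 3 ≤ i) (hi2 : i ≤ a - 1)
    (F : Type*) [Field F] [Fintype F] [DecidableEq F] (hF : Fintype.card F = q) :
    ∃ G : Matrix (Fin (2 * i - 3)) (Fin n) (Polynomial F),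
      isReduced G ∧
      convDegree G = 4 ∧
      convMemory G = 2 ∧
      (∀ v ∈ convCode G, v ≠ 0 → n - 2 * i ≤ polyWeight v) := by
  obtain ⟨α⟩ : Nonempty (Fin n ≃ Option F) :=
    Fintype.card_eq.mp (by rw [Fintype.card_fin, Fintype.card_option, hF, hn])
  obtain ⟨y⟩ : Nonempty (Fin (2 * i - 3) ↪ Fˣ) :=
    Function.Embedding.nonempty_of_card_le (by rw [Fintype.card_fin, Fintype.card_units, hF]; omega)
  have hy : Function.Injective fun c => (y c : F) := Units.val_injective.comp y.injective
  have hy0 : ∀ c, (y c : F) ≠ 0 := fun c => (y c).ne_zero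
  have hS : ∀ c, α (α.symm (some (y c : F))) = some (y c : F) := fun c => α.apply_symm_apply _
  have hdeg := convDegree_memoryTwoGenerator (k := 2 * i - 3) (by omega) (hS ⟨0, by omega⟩) (hy0 _)
  have hminor := natDegree_det_submatrix_memoryTwoGenerator (by omega) hy hy0 hS
  refine ⟨memoryTwoGenerator _ α,
    isReduced_of_le_natDegree_det (isBasic_memoryTwoGenerator α.injective (by omega)) _
      (hdeg.trans hminor.symm).le,
    hdeg, convMemory_memoryTwoGenerator (by omega) (hS ⟨0, by omega⟩) (hy0 _),
    fun v hv hv0 => ?_⟩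
  have := le_polyWeight_of_mem_convCode_memoryTwoGenerator α.injective hv hv0
  omega

theorem memory_two_convolutional (p t q n a : ℕ) (hp : p.Prime) (hodd : Odd p)
    (ht : 2 ≤ t) (hq : q = p ^ t) (hn : n = q + 1) (ha : a = n / 2)
    (i : ℕ) (hi1 : 3 ≤ i) (hi2 : i ≤ a - 1)
    (F : Type*) [Field F] [Fintype F] [DecidableEq F] (hF : Fintype.card F = q) :
    ∃ G : Matrix (Fin (2 * i - 3)) (Fin n) (Polynomial F),
      isReduced G ∧
      convDegree G = 4 ∧
      convMemory G = 2 ∧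
      (∀ v ∈ convCode G, v ≠ 0 → n - 2 * i ≤ polyWeight v) :=
  memory_two_convolutional_general q n a hn ha i hi1 hi2 F hF
end
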